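/- Let A be a Banach algebra, X a Banach A-bimodule, and D : A → X* a derivation such that its double adjoint D'' : A** → X*** is also a derivation (with respect to the first Arens product on A** and the canonical A**-bimodule structure on X***) and D'' is surjective. Then for every x'' in X**, the map F ↦ x''·F from A** to X** is weak*-to-weak continuous. -/

import Mathlib

open NormedSpace ContinuousLinearMap Filter

noncomputable section

namespace NormedSpace

/-- The topological dual of a seminormed space `E` (the old Mathlib `NormedSpace.Dual`,
no longer in Mathlib; restored here verbatim with its helper instances). -/
abbrev Dual (𝕜 : Type*) [NontriviallyNormedField 𝕜] (E : Type*) [SeminormedAddCommGroup E]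
    [NormedSpace 𝕜 E] : Type _ :=
  E →L[𝕜] 𝕜

instance (𝕜 : Type*) [NontriviallyNormedField 𝕜] (E : Type*) [SeminormedAddCommGroup E]
    [NormedSpace 𝕜 E] : NormedSpace 𝕜 (Dual 𝕜 E) :=
  inferInstance

instance (𝕜 : Type*) [NontriviallyNormedField 𝕜] (E : Type*) [SeminormedAddCommGroup E]
    [NormedSpace 𝕜 E] : SeminormedAddCommGroup (Dual 𝕜 E) :=
  inferInstance

end NormedSpace

/-- The adjoint (dual map) of a continuous linear map: `dMap T φ = φ ∘ T`. -/
def dMap {E F : Type*} [NormedAddCommGroup E] [NormedSpace ℝ E]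
    [NormedAddCommGroup F] [NormedSpace ℝ F] (T : E →L[ℝ] F) :
    Dual ℝ F →L[ℝ] Dual ℝ E :=
  (ContinuousLinearMap.compL ℝ E F ℝ).flip T

/-- The double adjoint of a continuous linear map. -/
def ddMap {E F : Type*} [NormedAddCommGroup E] [NormedSpace ℝ E]
    [NormedAddCommGroup F] [NormedSpace ℝ F] (T : E →L[ℝ] F) :
    Dual ℝ (Dual ℝ E) →L[ℝ] Dual ℝ (Dual ℝ F) :=
  dMap (dMap T)

/-- The (first, left) Arens extension of a bounded bilinear map `m : E × F → G` to the
biduals, via the classical three steps: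
`⟨g'·e, f⟩ = ⟨g', m e f⟩`, `⟨Ψ·g', e⟩ = ⟨Ψ, g'·e⟩`, `⟨arensExt m Φ Ψ, g'⟩ = ⟨Φ, Ψ·g'⟩`. -/
def arensExt {E F G : Type*} [NormedAddCommGroup E] [NormedSpace ℝ E]
    [NormedAddCommGroup F] [NormedSpace ℝ F] [NormedAddCommGroup G] [NormedSpace ℝ G]
    (m : E →L[ℝ] F →L[ℝ] G) :
    Dual ℝ (Dual ℝ E) →L[ℝ] Dual ℝ (Dual ℝ F) →L[ℝ] Dual ℝ (Dual ℝ G) :=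
  let s1 : E →L[ℝ] (Dual ℝ G →L[ℝ] Dual ℝ F) :=
    ((ContinuousLinearMap.compL ℝ F G ℝ).flip).comp m
  let s2 : Dual ℝ G →L[ℝ] (Dual ℝ (Dual ℝ F) →L[ℝ] Dual ℝ E) :=
    ((ContinuousLinearMap.compL ℝ E (Dual ℝ F) ℝ).flip).comp s1.flip
  (((ContinuousLinearMap.compL ℝ (Dual ℝ G) (Dual ℝ E) ℝ).flip).comp s2.flip).flip

/-- The first Arens product on the bidual of a (possibly non-unital) Banach algebra:
`⟨F G, a'⟩ = ⟨F, G·a'⟩` where `⟨G·a', a⟩ = ⟨G, a'·a⟩` and `⟨a'·a, b⟩ = ⟨a', a*b⟩`. -/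
def arens1 (A : Type*) [NonUnitalNormedRing A] [NormedSpace ℝ A]
    [IsScalarTower ℝ A A] [SMulCommClass ℝ A A] :
    Dual ℝ (Dual ℝ A) →L[ℝ] Dual ℝ (Dual ℝ A) →L[ℝ] Dual ℝ (Dual ℝ A) :=
  arensExt (ContinuousLinearMap.mul ℝ A)

/-- The second Arens product on the bidual of a (possibly non-unital) Banach algebra:
`⟨F ∘ G, a'⟩ = ⟨G, a'∘F⟩` where `⟨a'∘F, a⟩ = ⟨F, a∘a'⟩` and `⟨a∘a', b⟩ = ⟨a', b*a⟩`. -/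
def arens2 (A : Type*) [NonUnitalNormedRing A] [NormedSpace ℝ A]
    [IsScalarTower ℝ A A] [SMulCommClass ℝ A A] :
    Dual ℝ (Dual ℝ A) →L[ℝ] Dual ℝ (Dual ℝ A) →L[ℝ] Dual ℝ (Dual ℝ A) :=
  (arensExt ((ContinuousLinearMap.mul ℝ A).flip)).flip

/-- `f`, a map from a dual space to a normed space, is weak-star-to-weak continuous. -/
def WstarToWeakContinuous {E F : Type*} [NormedAddCommGroup E] [NormedSpace ℝ E]
    [NormedAddCommGroup F] [NormedSpace ℝ F]
    (f : Dual ℝ E → F) : Prop :=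
  Continuous fun x : WeakDual ℝ E => toWeakSpace ℝ F (f x)

/-!
Surjectivity of `D''` means that every functional on `X**` is `D''G` for some `G ∈ A**`.
Evaluating the derivation identity `D''(F □ G) = D''G · F + G · D''F` at `x''` shows that
`⟨D''G, x''·F⟩ = ⟨F, G·D'x'' - D'(G·x'')⟩`, where `G·D'x'' - D'(G·x'')` lies in `A*`.
So every functional composed with `F ↦ x''·F` is weak*-continuous in `F`.
-/

/-- The middle step `Ψ·g'` of `arensExt`, given by `⟨Ψ·g', e⟩ = ⟨Ψ, g'·e⟩`. -/
def arensDualAct {E F G : Type*} [NormedAddCommGroup E] [NormedSpace ℝ E]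
    [NormedAddCommGroup F] [NormedSpace ℝ F] [NormedAddCommGroup G] [NormedSpace ℝ G]
    (m : E →L[ℝ] F →L[ℝ] G) (Ψ : Dual ℝ (Dual ℝ F)) : Dual ℝ G →L[ℝ] Dual ℝ E :=
  ((((ContinuousLinearMap.compL ℝ E (Dual ℝ F) ℝ).flip).comp
    ((((ContinuousLinearMap.compL ℝ F G ℝ).flip).comp m).flip)).flip) Ψ

theorem wstarToWeakContinuous_of_forall_exists_eval {E F : Type*} [NormedAddCommGroup E]
    [NormedSpace ℝ E] [NormedAddCommGroup F] [NormedSpace ℝ F] (f : Dual ℝ E → F)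
    (h : ∀ φ : Dual ℝ F, ∃ e : E, ∀ x, φ (f x) = x e) :
    WstarToWeakContinuous f := by
  refine WeakBilin.continuous_of_continuous_eval _ fun φ => ?_
  obtain ⟨e, he⟩ := h φ
  exact (WeakDual.eval_continuous e).congr fun x => (he x).symm

theorem ddMap_apply_arensExt_flip {A X : Type*} [NonUnitalNormedRing A] [NormedSpace ℝ A]
    [IsScalarTower ℝ A A] [SMulCommClass ℝ A A] [NormedAddCommGroup X] [NormedSpace ℝ X]
    (l r : A →L[ℝ] X →L[ℝ] X) (D : A →L[ℝ] Dual ℝ X)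
    (hD'' : ∀ F G : Dual ℝ (Dual ℝ A),
      ddMap D (arens1 A F G) =
        dMap ((arensExt r.flip).flip F) (ddMap D G) + dMap (arensExt l G) (ddMap D F))
    (F G : Dual ℝ (Dual ℝ A)) (x'' : Dual ℝ (Dual ℝ X)) :
    ddMap D G (arensExt r.flip x'' F) =
      F (arensDualAct (ContinuousLinearMap.mul ℝ A) G (dMap D x'') -
        dMap D (arensExt l G x'')) := by
  have h := congrArg (· x'') (hD'' F G)
  rw [add_apply] at h
  change F (arensDualAct _ G (dMap D x'')) =
    ddMap D G (arensExt r.flip x'' F) + F (dMap D (arensExt l G x'')) at h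
  rw [map_sub, h, add_sub_cancel_right]

variable {A : Type*} [NonUnitalNormedRing A] [NormedSpace ℝ A]
  [IsScalarTower ℝ A A] [SMulCommClass ℝ A A] [CompleteSpace A]
variable {X : Type*} [NormedAddCommGroup X] [NormedSpace ℝ X] [CompleteSpace X]

theorem wstarw_of_bidual_derivation_surjective_general
    -- `l` is the left action, `r a x = x · a` is the right action of the bimodule `X`
    (l r : A →L[ℝ] X →L[ℝ] X)
    (D : A →L[ℝ] Dual ℝ X)
    (hD'' : ∀ F G : Dual ℝ (Dual ℝ A),
      ddMap D (arens1 A F G) =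
        dMap ((arensExt r.flip).flip F) (ddMap D G) + dMap (arensExt l G) (ddMap D F))
    (hsurj : Function.Surjective (ddMap D))
    (x'' : Dual ℝ (Dual ℝ X)) :
    WstarToWeakContinuous fun F : Dual ℝ (Dual ℝ A) => arensExt r.flip x'' F := by
  refine wstarToWeakContinuous_of_forall_exists_eval _ fun Φ => ?_
  obtain ⟨G, rfl⟩ := hsurj Φ
  exact ⟨_, fun F => ddMap_apply_arensExt_flip l r D hD'' F G x''⟩

/-- If `D : A → X*` is a derivation whose double adjoint `D'' : A** → X***` is a surjective
derivation (first Arens product, canonical `A**`-bimodule structure on `X***`), then for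
every `x'' ∈ X**` the map `F ↦ x''·F` is weak-star-to-weak continuous. -/
theorem wstarw_of_bidual_derivation_surjective
    -- `l` is the left action, `r a x = x · a` is the right action of the bimodule `X`
    (l r : A →L[ℝ] X →L[ℝ] X)
    (hl : ∀ a b : A, l (a * b) = (l a).comp (l b))
    (hr : ∀ a b : A, r (a * b) = (r b).comp (r a))
    (hc : ∀ a b : A, (l a).comp (r b) = (r b).comp (l a))
    (D : A →L[ℝ] Dual ℝ X)
    (hD : ∀ a b : A, D (a * b) = dMap (r a) (D b) + dMap (l b) (D a))
    (hD'' : ∀ F G : Dual ℝ (Dual ℝ A),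
      ddMap D (arens1 A F G) =
        dMap ((arensExt r.flip).flip F) (ddMap D G) + dMap (arensExt l G) (ddMap D F))
    (hsurj : Function.Surjective (ddMap D))
    (x'' : Dual ℝ (Dual ℝ X)) :
    WstarToWeakContinuous fun F : Dual ℝ (Dual ℝ A) => arensExt r.flip x'' F :=
  wstarw_of_bidual_derivation_surjective_general l r D hD'' hsurj x''
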